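/- arXiv:1401.7053 — 2 statements merged into one kernel-verified Lean document; each statement's English description precedes it below -/
import Mathlib

section
/- Let A = (a_1, a_2, …) be a row vector with (a_j) ∈ ℓ². Then there exists an infinite matrix Q_A, bounded on ℓ², whose entries belong to {0, ±a_j : j ≥ 1}, such that the range of Q_A is contained in the kernel of A (viewed as a functional on ℓ²) and (A A*) I − A* A = Q_A Q_A*. -/
set_option maxHeartbeats 1000000


open Complex MeasureTheory Metric Set Filter
open scoped ENNReal Topology

noncomputable section

/-- The open unit disc in `ℂ`. -/
def oDisc : Set ℂ := Metric.ball 0 1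

/-- Squared `H²` norm (extended-real valued):
`sup_{0<r<1} (1/2π) ∫₀^{2π} ‖f(r e^{it})‖² dt`. -/
def h2E (f : ℂ → ℂ) : ℝ≥0∞ :=
  ⨆ r : Set.Ioo (0:ℝ) 1,
    ENNReal.ofReal ((2 * Real.pi)⁻¹ * ∫ t in (0:ℝ)..(2 * Real.pi),
      ‖f ((r.1 : ℂ) * Complex.exp ((t : ℂ) * Complex.I))‖ ^ 2)

/-- Membership in the Hardy space `H²(𝔻)`. -/
def MemH2 (f : ℂ → ℂ) : Prop := DifferentiableOn ℂ f oDisc ∧ h2E f < ⊤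

/-- Squared `H²` norm, real valued. -/
def h2normSq (f : ℂ → ℂ) : ℝ := (h2E f).toReal

/-- Membership in the Dirichlet-type space `D(δ_ζ)`:
`f` admits a decomposition `f = c + (z-ζ) g` with `g ∈ H²`. -/
def MemD (ζ : ℂ) (f : ℂ → ℂ) : Prop :=
  ∃ c : ℂ, ∃ g : ℂ → ℂ, MemH2 g ∧ ∀ z ∈ oDisc, f z = c + (z - ζ) * g z

open scoped Classical in
/-- The local Dirichlet integral of `h` at `ζ` (extended-real valued): the squared `H²`
norm of `(h - h(ζ))/(z-ζ)` when such a decomposition exists, `⊤` otherwise. -/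
def Dloc (ζ : ℂ) (h : ℂ → ℂ) : ℝ≥0∞ :=
  if hd : ∃ p : ℂ × (ℂ → ℂ), MemH2 p.2 ∧ ∀ z ∈ oDisc, h z = p.1 + (z - ζ) * p.2 z
  then h2E hd.choose.2 else ⊤



namespace Stmt12Aux

/-- matrix entry: column `n` codes the pair `Nat.unpair n = (j,k)`; nonzero only if `j < k`. -/
def qmat (a : ℕ → ℂ) (i n : ℕ) : ℂ :=
  if (Nat.unpair n).1 < (Nat.unpair n).2 then
    if i = (Nat.unpair n).1 then a (Nat.unpair n).2
    else if i = (Nat.unpair n).2 then -a (Nat.unpair n).1 else 0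
  else 0

/-- reindexing of the support of row `i`. -/
def eI (i k : ℕ) : ℕ := if i < k then Nat.pair i k else Nat.pair k i

lemma eI_inj (i : ℕ) : Function.Injective (eI i) := by
  intro k k' h
  unfold eI at h
  by_cases h1 : i < k <;> by_cases h2 : i < k' <;> simp [h1, h2, Nat.pair_eq_pair] at h <;> omega

lemma q_eI (a : ℕ → ℂ) (i k : ℕ) :
    qmat a i (eI i k) = if i < k then a k else if k < i then -a k else 0 := by
  unfold qmat eI
  by_cases h1 : i < k
  · simp [h1, Nat.unpair_pair, h1.ne]
  · by_cases h2 : k < i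
    · simp [h1, h2, Nat.unpair_pair, h2.ne']
    · have : i = k := by omega
      simp [h1, h2, this]

lemma q_zero_outside (a : ℕ → ℂ) (i : ℕ) : ∀ n ∉ Set.range (eI i), qmat a i n = 0 := by
  intro n hn
  unfold qmat
  by_cases hlt : (Nat.unpair n).1 < (Nat.unpair n).2
  · simp only [hlt, if_true]
    by_cases h1 : i = (Nat.unpair n).1
    · exfalso; apply hn
      refine ⟨(Nat.unpair n).2, ?_⟩
      unfold eI
      rw [← h1] at hlt
      rw [if_pos hlt, h1, Nat.pair_unpair]
    · by_cases h2 : i = (Nat.unpair n).2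
      · exfalso; apply hn
        refine ⟨(Nat.unpair n).1, ?_⟩
        unfold eI
        rw [← h2] at hlt
        rw [if_neg (by omega), h2, Nat.pair_unpair]
      · simp [h1, h2]
  · simp [hlt]

lemma q_col_zero (a : ℕ → ℂ) (n : ℕ) :
    ∀ m ∉ ({(Nat.unpair n).1, (Nat.unpair n).2} : Finset ℕ), qmat a m n = 0 := by
  intro m hm
  simp only [Finset.mem_insert, Finset.mem_singleton, not_or] at hm
  unfold qmat
  simp [hm.1, hm.2]

lemma q_col_val1 (a : ℕ → ℂ) (n : ℕ) (h : (Nat.unpair n).1 < (Nat.unpair n).2) :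
    qmat a (Nat.unpair n).1 n = a (Nat.unpair n).2 := by
  unfold qmat; simp [h]

lemma q_col_val2 (a : ℕ → ℂ) (n : ℕ) (h : (Nat.unpair n).1 < (Nat.unpair n).2) :
    qmat a (Nat.unpair n).2 n = -a (Nat.unpair n).1 := by
  unfold qmat; simp [h, h.ne']

lemma summable_norm_mul {ι : Type*} {u v : ι → ℂ}
    (hu : Summable fun n => ‖u n‖ ^ 2) (hv : Summable fun n => ‖v n‖ ^ 2) :
    Summable fun n => ‖u n‖ * ‖v n‖ := by
  refine Summable.of_nonneg_of_le (fun n => by positivity)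
    (fun n => ?_) (((hu.add hv).div_const 2))
  have h := two_mul_le_add_sq (‖u n‖) (‖v n‖)
  nlinarith [norm_nonneg (u n), norm_nonneg (v n)]

lemma summable_mul_sq {ι : Type*} {u v : ι → ℂ}
    (hu : Summable fun n => ‖u n‖ ^ 2) (hv : Summable fun n => ‖v n‖ ^ 2) :
    Summable fun n => u n * v n := by
  refine Summable.of_norm ?_
  simpa only [norm_mul] using summable_norm_mul hu hv

/-- Cauchy–Schwarz for tsums. -/
lemma tsum_cs {ι : Type*} {u v : ι → ℂ}
    (hu : Summable fun n => ‖u n‖ ^ 2) (hv : Summable fun n => ‖v n‖ ^ 2) :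
    ‖∑' n, u n * v n‖ ^ 2 ≤ (∑' n, ‖u n‖ ^ 2) * (∑' n, ‖v n‖ ^ 2) := by
  have hnm := summable_norm_mul hu hv
  have h1 : ‖∑' n, u n * v n‖ ≤ ∑' n, ‖u n‖ * ‖v n‖ := by
    calc ‖∑' n, u n * v n‖ ≤ ∑' n, ‖u n * v n‖ :=
          norm_tsum_le_tsum_norm (by simpa only [norm_mul] using hnm)
      _ = ∑' n, ‖u n‖ * ‖v n‖ := by simp [norm_mul]
  have hP : (0:ℝ) ≤ (∑' n, ‖u n‖ ^ 2) * (∑' n, ‖v n‖ ^ 2) :=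
    mul_nonneg (tsum_nonneg fun _ => by positivity) (tsum_nonneg fun _ => by positivity)
  have h2 : (∑' n, ‖u n‖ * ‖v n‖) ≤ Real.sqrt ((∑' n, ‖u n‖ ^ 2) * (∑' n, ‖v n‖ ^ 2)) := by
    refine Summable.tsum_le_of_sum_le hnm fun s => ?_
    rw [Real.le_sqrt (Finset.sum_nonneg fun n _ => by positivity)]
    refine le_trans ?_ (le_of_eq rfl)
    calc (∑ n ∈ s, ‖u n‖ * ‖v n‖) ^ 2
        ≤ (∑ n ∈ s, ‖u n‖ ^ 2) * ∑ n ∈ s, ‖v n‖ ^ 2 :=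
          Finset.sum_mul_sq_le_sq_mul_sq s _ _
      _ ≤ (∑' n, ‖u n‖ ^ 2) * (∑' n, ‖v n‖ ^ 2) := by
          have h1 := Summable.sum_le_tsum s (fun n _ => by positivity : ∀ n ∉ s, 0 ≤ ‖u n‖^2) hu
          have h2 := Summable.sum_le_tsum s (fun n _ => by positivity : ∀ n ∉ s, 0 ≤ ‖v n‖^2) hv
          have h3 : (0:ℝ) ≤ ∑ n ∈ s, ‖v n‖ ^ 2 := Finset.sum_nonneg fun n _ => by positivity
          have h4 : (0:ℝ) ≤ ∑' n, ‖u n‖ ^ 2 := tsum_nonneg fun _ => by positivity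
          nlinarith
    exact hP
  have hnn : (0:ℝ) ≤ ∑' n, ‖u n‖ * ‖v n‖ :=
    tsum_nonneg fun n => mul_nonneg (norm_nonneg _) (norm_nonneg _)
  calc ‖∑' n, u n * v n‖ ^ 2 ≤ (∑' n, ‖u n‖ * ‖v n‖) ^ 2 := by
        gcongr
    _ ≤ Real.sqrt ((∑' n, ‖u n‖ ^ 2) * (∑' n, ‖v n‖ ^ 2)) ^ 2 := by
        gcongr
    _ = _ := Real.sq_sqrt hP

section Main

variable {a : ℕ → ℂ} (ha : Summable fun j => ‖a j‖ ^ 2)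

/-- squared norms along a row, reindexed. -/
lemma row_sq_le (i k : ℕ) : ‖qmat a i (eI i k)‖ ^ 2 ≤ ‖a k‖ ^ 2 := by
  rw [q_eI]
  split_ifs <;> simp [norm_neg]

include ha in
lemma row_sq_summable (i : ℕ) : Summable fun k => ‖qmat a i (eI i k)‖ ^ 2 :=
  Summable.of_nonneg_of_le (fun k => by positivity) (fun k => row_sq_le i k) ha

omit ha in
/-- the reindexed row sum equals the native one, for ℓ² vectors. -/
lemma row_tsum_eq {x : ℕ → ℂ} (i : ℕ) :
    ∑' n, qmat a i n * x n = ∑' k, qmat a i (eI i k) * x (eI i k) := by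
  refine ((eI_inj i).tsum_eq ?_).symm
  intro n hn
  by_contra h
  exact hn (by simp [q_zero_outside a i n h])

end Main

end Stmt12Aux

namespace Stmt12Aux
section Main2
variable {a : ℕ → ℂ} (ha : Summable fun j => ‖a j‖ ^ 2)

include ha in
lemma bounded {x : ℕ → ℂ} (hx : Summable fun n => ‖x n‖ ^ 2) :
    (∑' i, ‖∑' n, qmat a i n * x n‖ ^ 2) ≤ (2 * ∑' j, ‖a j‖ ^ 2) * ∑' n, ‖x n‖ ^ 2 := by
  set N : ℝ := ∑' j, ‖a j‖ ^ 2 with hN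
  have hN0 : 0 ≤ N := tsum_nonneg fun _ => by positivity
  -- truncated column data
  set V : ℕ → ℕ → ℝ := fun i k => if qmat a i (eI i k) = 0 then 0 else ‖x (eI i k)‖ ^ 2 with hV
  have hV0 : ∀ i k, 0 ≤ V i k := by
    intro i k; simp only [hV]; split_ifs <;> positivity
  -- the comparison function on the plane
  set g : ℕ → ℝ := fun n => if (Nat.unpair n).1 < (Nat.unpair n).2 then ‖x n‖ ^ 2 else 0 with hg
  have hgsummable : Summable g := by
    refine Summable.of_nonneg_of_le (fun n => ?_) (fun n => ?_) hx <;>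
      · simp only [hg]; split_ifs <;> first | rfl | positivity
  have hgle : ∑' n, g n ≤ ∑' n, ‖x n‖ ^ 2 := by
    refine Summable.tsum_le_tsum (fun n => ?_) hgsummable hx
    simp only [hg]; split_ifs <;> first | rfl | positivity
  -- two injections of the plane
  have hW1 : Summable fun p : ℕ × ℕ => g (Nat.pair p.1 p.2) :=
    (Nat.pairEquiv.summable_iff (f := g)).mpr hgsummable
  have hW1sum : ∑' p : ℕ × ℕ, g (Nat.pair p.1 p.2) = ∑' n, g n :=
    Nat.pairEquiv.tsum_eq g
  have e2 : ℕ × ℕ ≃ ℕ := (Equiv.prodComm ℕ ℕ).trans Nat.pairEquiv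
  have hW2 : Summable fun p : ℕ × ℕ => g (Nat.pair p.2 p.1) :=
    (((Equiv.prodComm ℕ ℕ).trans Nat.pairEquiv).summable_iff (f := g)).mpr hgsummable
  have hW2sum : ∑' p : ℕ × ℕ, g (Nat.pair p.2 p.1) = ∑' n, g n :=
    ((Equiv.prodComm ℕ ℕ).trans Nat.pairEquiv).tsum_eq g
  have hVle : ∀ p : ℕ × ℕ, V p.1 p.2 ≤ g (Nat.pair p.1 p.2) + g (Nat.pair p.2 p.1) := by
    rintro ⟨i, k⟩
    show V i k ≤ g (Nat.pair i k) + g (Nat.pair k i)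
    have hg1 : ∀ m l : ℕ, 0 ≤ g (Nat.pair m l) := by
      intro m l; simp only [hg]; split_ifs <;> first | rfl | positivity
    rcases lt_trichotomy i k with h | h | h
    · have he : eI i k = Nat.pair i k := by unfold eI; rw [if_pos h]
      have hb : V i k ≤ g (Nat.pair i k) := by
        simp only [hV, hg, he, Nat.unpair_pair]
        split_ifs with h1 h2 <;> first | rfl | positivity | (exact absurd h h2)
      linarith [hg1 k i]
    · subst h
      have hq0 : qmat a i (eI i i) = 0 := by rw [q_eI]; simp
      have hz : V i i = 0 := by simp only [hV, hq0, if_pos]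
      rw [hz]
      linarith [hg1 i i]
    · have he : eI i k = Nat.pair k i := by unfold eI; rw [if_neg (by omega)]
      have hb : V i k ≤ g (Nat.pair k i) := by
        simp only [hV, hg, he, Nat.unpair_pair]
        split_ifs with h1 h2 <;> first | rfl | positivity | (exact absurd h h2)
      linarith [hg1 i k]
  have hWsummable : Summable fun p : ℕ × ℕ => V p.1 p.2 :=
    Summable.of_nonneg_of_le (fun p => hV0 p.1 p.2) hVle (hW1.add hW2)
  have hWtot : ∑' p : ℕ × ℕ, V p.1 p.2 ≤ 2 * ∑' n, ‖x n‖ ^ 2 := by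
    calc ∑' p : ℕ × ℕ, V p.1 p.2
        ≤ ∑' p : ℕ × ℕ, (g (Nat.pair p.1 p.2) + g (Nat.pair p.2 p.1)) :=
          Summable.tsum_le_tsum hVle hWsummable (hW1.add hW2)
      _ = (∑' p : ℕ × ℕ, g (Nat.pair p.1 p.2)) + ∑' p : ℕ × ℕ, g (Nat.pair p.2 p.1) :=
          Summable.tsum_add hW1 hW2
      _ = (∑' n, g n) + ∑' n, g n := by rw [hW1sum, hW2sum]
      _ ≤ 2 * ∑' n, ‖x n‖ ^ 2 := by linarith
  -- fiberwise summability and row bounds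
  have hVi : ∀ i, Summable fun k => V i k := fun i => hWsummable.prod_factor i
  have hrow : ∀ i, ‖∑' n, qmat a i n * x n‖ ^ 2 ≤ N * ∑' k, V i k := by
    intro i
    have hxk : Summable fun k => ‖x (eI i k)‖ ^ 2 := hx.comp_injective (eI_inj i)
    have hvsq : Summable fun k =>
        ‖(if qmat a i (eI i k) = 0 then 0 else x (eI i k) : ℂ)‖ ^ 2 := by
      refine Summable.of_nonneg_of_le (fun k => by positivity) (fun k => ?_) hxk
      split_ifs <;> simp <;> positivity
    have hre := row_tsum_eq (a := a) (x := x) i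
    have heq : ∀ k, qmat a i (eI i k) * x (eI i k) =
        qmat a i (eI i k) * (if qmat a i (eI i k) = 0 then 0 else x (eI i k)) := by
      intro k; split_ifs with h <;> simp [h]
    have hVnorm : ∀ k, ‖(if qmat a i (eI i k) = 0 then 0 else x (eI i k) : ℂ)‖ ^ 2 = V i k := by
      intro k; simp only [hV]; split_ifs <;> simp
    calc ‖∑' n, qmat a i n * x n‖ ^ 2
        = ‖∑' k, qmat a i (eI i k) *
            (if qmat a i (eI i k) = 0 then 0 else x (eI i k))‖ ^ 2 := by
          rw [hre]
          congr 2
          exact tsum_congr heq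
      _ ≤ (∑' k, ‖qmat a i (eI i k)‖ ^ 2) *
            ∑' k, ‖(if qmat a i (eI i k) = 0 then 0 else x (eI i k) : ℂ)‖ ^ 2 :=
          tsum_cs (row_sq_summable ha i) hvsq
      _ ≤ N * ∑' k, V i k := by
          have h1 : (∑' k, ‖qmat a i (eI i k)‖ ^ 2) ≤ N :=
            Summable.tsum_le_tsum (fun k => row_sq_le i k) (row_sq_summable ha i) ha
          have h2 : (∑' k, ‖(if qmat a i (eI i k) = 0 then 0 else x (eI i k) : ℂ)‖ ^ 2)
              = ∑' k, V i k := tsum_congr hVnorm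
          rw [h2]
          have h3 : 0 ≤ ∑' k, V i k := tsum_nonneg fun k => hV0 i k
          have h4 : 0 ≤ ∑' k, ‖qmat a i (eI i k)‖ ^ 2 := tsum_nonneg fun _ => by positivity
          nlinarith
  have hsumm2 : Summable fun i => N * ∑' k, V i k := by
    have := ((summable_prod_of_nonneg (fun p => hV0 p.1 p.2)).mp hWsummable).2
    exact this.mul_left N
  have hysum : Summable fun i => ‖∑' n, qmat a i n * x n‖ ^ 2 :=
    Summable.of_nonneg_of_le (fun i => by positivity) hrow hsumm2
  calc ∑' i, ‖∑' n, qmat a i n * x n‖ ^ 2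
      ≤ ∑' i, N * ∑' k, V i k := Summable.tsum_le_tsum hrow hysum hsumm2
    _ = N * ∑' i, ∑' k, V i k := tsum_mul_left
    _ = N * ∑' p : ℕ × ℕ, V p.1 p.2 := by
        rw [Summable.tsum_prod' hWsummable hVi]
    _ ≤ (2 * N) * ∑' n, ‖x n‖ ^ 2 := by nlinarith [hWtot, (tsum_nonneg (fun p : ℕ × ℕ => hV0 p.1 p.2) : 0 ≤ ∑' p : ℕ × ℕ, V p.1 p.2)]

end Main2
end Stmt12Aux

namespace Stmt12Aux
section Main3
variable {a : ℕ → ℂ} (ha : Summable fun j => ‖a j‖ ^ 2)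

include ha in
lemma in_kernel {x : ℕ → ℂ} (hx : Summable fun n => ‖x n‖ ^ 2) :
    (∑' i, a i * ∑' n, qmat a i n * x n) = 0 := by
  set F : ℕ → ℕ → ℂ := fun n i => a i * (qmat a i n * x n) with hF
  -- column norm sums
  have hc2 : Summable fun n => (‖a (Nat.unpair n).1‖ * ‖a (Nat.unpair n).2‖) ^ 2 := by
    have hprod : Summable fun p : ℕ × ℕ => ‖a p.1‖ ^ 2 * ‖a p.2‖ ^ 2 :=
      ha.mul_of_nonneg ha (fun _ => by positivity) (fun _ => by positivity)
    have := (Nat.pairEquiv.symm.summable_iff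
      (f := fun p : ℕ × ℕ => ‖a p.1‖ ^ 2 * ‖a p.2‖ ^ 2)).mpr hprod
    refine this.congr fun n => ?_
    simp [Nat.pairEquiv_symm_apply, mul_pow]
  have hcx : Summable fun n => (‖a (Nat.unpair n).1‖ * ‖a (Nat.unpair n).2‖) * ‖x n‖ := by
    refine Summable.of_nonneg_of_le (fun n => by positivity) (fun n => ?_)
      ((hc2.add hx).div_const 2)
    set c := ‖a (Nat.unpair n).1‖ * ‖a (Nat.unpair n).2‖ with hc
    have hc0 : 0 ≤ c := by positivity
    nlinarith [sq_nonneg (c - ‖x n‖), norm_nonneg (x n)]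
  -- fiberwise (in i) summability of norms with bound
  have hFn : ∀ n, Summable fun i => ‖F n i‖ := by
    intro n
    refine summable_of_ne_finset_zero
      (s := {(Nat.unpair n).1, (Nat.unpair n).2}) fun m hm => ?_
    simp [hF, q_col_zero a n m hm]
  have hFb : ∀ n, (∑' i, ‖F n i‖) ≤
      2 * ((‖a (Nat.unpair n).1‖ * ‖a (Nat.unpair n).2‖) * ‖x n‖) := by
    intro n
    rw [tsum_eq_sum (s := {(Nat.unpair n).1, (Nat.unpair n).2})
      (fun m hm => by simp [hF, q_col_zero a n m hm])]
    by_cases hlt : (Nat.unpair n).1 < (Nat.unpair n).2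
    · rw [Finset.sum_pair hlt.ne]
      have h1 : ‖F n (Nat.unpair n).1‖ =
          ‖a (Nat.unpair n).1‖ * (‖a (Nat.unpair n).2‖ * ‖x n‖) := by
        simp [hF, q_col_val1 a n hlt, norm_mul]
      have h2 : ‖F n (Nat.unpair n).2‖ =
          ‖a (Nat.unpair n).2‖ * (‖a (Nat.unpair n).1‖ * ‖x n‖) := by
        simp [hF, q_col_val2 a n hlt, norm_mul]
      rw [h1, h2]; ring_nf; rfl
    · have hz : ∀ m, F n m = 0 := by
        intro m
        have : qmat a m n = 0 := by unfold qmat; simp [hlt]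
        simp [hF, this]
      have : ∀ m ∈ ({(Nat.unpair n).1, (Nat.unpair n).2} : Finset ℕ), ‖F n m‖ = 0 := by
        intro m _; simp [hz m]
      rw [Finset.sum_congr rfl this]
      simp
      positivity
  have hFsum : Summable (Function.uncurry F) := by
    refine Summable.of_norm ?_
    rw [summable_prod_of_nonneg (fun p => norm_nonneg _)]
    exact ⟨hFn, Summable.of_nonneg_of_le
      (fun n => tsum_nonneg fun i => norm_nonneg _) hFb (hcx.mul_left 2)⟩
  have hswap : ∑' n, ∑' i, F n i = ∑' i, ∑' n, F n i := (Summable.tsum_comm (f := F) hFsum).symm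
  have hcol : ∀ n, ∑' i, F n i = 0 := by
    intro n
    rw [tsum_eq_sum (s := {(Nat.unpair n).1, (Nat.unpair n).2})
      (fun m hm => by simp [hF, q_col_zero a n m hm])]
    by_cases hlt : (Nat.unpair n).1 < (Nat.unpair n).2
    · rw [Finset.sum_pair hlt.ne]
      simp only [hF, q_col_val1 a n hlt, q_col_val2 a n hlt]
      ring
    · have : ∀ m, F n m = 0 := by
        intro m
        have : qmat a m n = 0 := by unfold qmat; simp [hlt]
        simp [hF, this]
      simp [this]
  have hrw : ∀ i, a i * ∑' n, qmat a i n * x n = ∑' n, F n i := by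
    intro i
    rw [← tsum_mul_left]
  calc ∑' i, a i * ∑' n, qmat a i n * x n = ∑' i, ∑' n, F n i := tsum_congr hrw
    _ = ∑' n, ∑' i, F n i := hswap.symm
    _ = 0 := by simp [hcol]

end Main3
end Stmt12Aux

namespace Stmt12Aux
section Main4
variable {a : ℕ → ℂ} (ha : Summable fun j => ‖a j‖ ^ 2)

omit ha in
lemma col_tsum (x : ℕ → ℂ) (n : ℕ) :
    (∑' m, (starRingEnd ℂ) (qmat a m n) * x m) =
      (if (Nat.unpair n).1 < (Nat.unpair n).2 then
        (starRingEnd ℂ) (a (Nat.unpair n).2) * x (Nat.unpair n).1 -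
          (starRingEnd ℂ) (a (Nat.unpair n).1) * x (Nat.unpair n).2 else 0) := by
  rw [tsum_eq_sum (s := {(Nat.unpair n).1, (Nat.unpair n).2})
    (fun m hm => by simp [q_col_zero a n m hm])]
  by_cases hlt : (Nat.unpair n).1 < (Nat.unpair n).2
  · rw [Finset.sum_pair hlt.ne, if_pos hlt, q_col_val1 a n hlt, q_col_val2 a n hlt]
    simp [map_neg]
    ring
  · rw [if_neg hlt]
    have : ∀ m, qmat a m n = 0 := by intro m; unfold qmat; simp [hlt]
    simp [this]

include ha in
lemma factorization {x : ℕ → ℂ} (hx : Summable fun n => ‖x n‖ ^ 2) (i : ℕ) :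
    ((∑' j, ‖a j‖ ^ 2 : ℝ) : ℂ) * x i - (starRingEnd ℂ) (a i) * (∑' j, a j * x j) =
      ∑' n, qmat a i n * ∑' m, (starRingEnd ℂ) (qmat a m n) * x m := by
  set G : ℕ → ℂ := fun n => ∑' m, (starRingEnd ℂ) (qmat a m n) * x m with hG
  have hre : ∑' n, qmat a i n * G n = ∑' k, qmat a i (eI i k) * G (eI i k) := by
    refine ((eI_inj i).tsum_eq ?_).symm
    intro n hn
    by_contra h
    exact hn (by simp [q_zero_outside a i n h])
  have hpt : ∀ k, qmat a i (eI i k) * G (eI i k) =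
      ((‖a k‖ ^ 2 : ℝ) : ℂ) * x i - (starRingEnd ℂ) (a i) * (a k * x k) := by
    intro k
    have hconj : ∀ z : ℂ, z * (starRingEnd ℂ) z = ((‖z‖ ^ 2 : ℝ) : ℂ) := by
      intro z
      rw [Complex.mul_conj']
      push_cast
      ring
    rcases lt_trichotomy i k with h | h | h
    · have he : eI i k = Nat.pair i k := by unfold eI; rw [if_pos h]
      have hGv : G (Nat.pair i k) = _ := col_tsum (a := a) x (Nat.pair i k)
      rw [q_eI, if_pos h, he, hGv]
      rw [Nat.unpair_pair]
      simp only [if_pos h]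
      have := hconj (a k)
      linear_combination x i * this
    · subst h
      have hq0 : qmat a i (eI i i) = 0 := by rw [q_eI]; simp
      rw [hq0, zero_mul]
      have := hconj (a i)
      linear_combination x i * this
    · have he : eI i k = Nat.pair k i := by unfold eI; rw [if_neg (by omega)]
      have hGv : G (Nat.pair k i) = _ := col_tsum (a := a) x (Nat.pair k i)
      rw [q_eI, if_neg (by omega), if_pos h, he, hGv]
      rw [Nat.unpair_pair]
      simp only [if_pos h]
      have := hconj (a k)
      linear_combination x i * this
  have hs1 : Summable fun k => ((‖a k‖ ^ 2 : ℝ) : ℂ) * x i :=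
    (Complex.summable_ofReal.mpr ha).mul_right (x i)
  have hs2 : Summable fun k => (starRingEnd ℂ) (a i) * (a k * x k) :=
    (summable_mul_sq ha hx).mul_left _
  calc ((∑' j, ‖a j‖ ^ 2 : ℝ) : ℂ) * x i - (starRingEnd ℂ) (a i) * (∑' j, a j * x j)
      = (∑' k, ((‖a k‖ ^ 2 : ℝ) : ℂ)) * x i
          - (starRingEnd ℂ) (a i) * (∑' j, a j * x j) := by
        rw [Complex.ofReal_tsum]
    _ = (∑' k, ((‖a k‖ ^ 2 : ℝ) : ℂ) * x i)
          - ∑' k, (starRingEnd ℂ) (a i) * (a k * x k) := by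
        rw [tsum_mul_right, tsum_mul_left]
    _ = ∑' k, (((‖a k‖ ^ 2 : ℝ) : ℂ) * x i - (starRingEnd ℂ) (a i) * (a k * x k)) :=
        (Summable.tsum_sub hs1 hs2).symm
    _ = ∑' k, qmat a i (eI i k) * G (eI i k) := by
        refine tsum_congr fun k => (hpt k).symm
    _ = ∑' n, qmat a i n * G n := hre.symm

end Main4
end Stmt12Aux

/-- Koszul-type factorization: for a row vector `A = (a_j) ∈ ℓ²` there is a matrix `Q_A`,
bounded on `ℓ²`, with entries in `{0, ±a_j}`, whose range lies in `ker A` and such that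
`(A A*) I - A* A = Q_A Q_A*`. -/
theorem stmt12 (a : ℕ → ℂ) (ha : Summable fun j => ‖a j‖ ^ 2) :
    ∃ q : ℕ → ℕ → ℂ,
      (∀ i j, q i j = 0 ∨ ∃ m, q i j = a m ∨ q i j = -a m) ∧
      (∃ K : ℝ, ∀ x : ℕ → ℂ, (Summable fun i => ‖x i‖ ^ 2) →
        (∑' i, ‖∑' j, q i j * x j‖ ^ 2) ≤ K * ∑' i, ‖x i‖ ^ 2) ∧
      (∀ x : ℕ → ℂ, (Summable fun i => ‖x i‖ ^ 2) →
        (∑' i, a i * ∑' j, q i j * x j) = 0) ∧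
      (∀ x : ℕ → ℂ, (Summable fun i => ‖x i‖ ^ 2) → ∀ i,
        ((∑' j, ‖a j‖ ^ 2 : ℝ) : ℂ) * x i - (starRingEnd ℂ) (a i) * (∑' j, a j * x j) =
          ∑' j, q i j * ∑' m, (starRingEnd ℂ) (q m j) * x m) := by
  refine ⟨Stmt12Aux.qmat a, ?_,
    ⟨2 * ∑' j, ‖a j‖ ^ 2, fun x hx => Stmt12Aux.bounded ha hx⟩,
    fun x hx => Stmt12Aux.in_kernel ha hx,
    fun x hx i => Stmt12Aux.factorization ha hx i⟩
  intro i n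
  unfold Stmt12Aux.qmat
  split_ifs with h1 h2 h3
  · exact Or.inr ⟨(Nat.unpair n).2, Or.inl rfl⟩
  · exact Or.inr ⟨(Nat.unpair n).1, Or.inr rfl⟩
  · exact Or.inl rfl
  · exact Or.inl rfl
end
end

section
/- Let f ∈ D(δ_1) with decomposition f = f(1) + (z−1)g, g ∈ H²(𝔻), and let φ ∈ H^∞ ∩ D(δ_1) with ‖φ‖_∞ ≤ 1 and D_1(φ) ≤ 1. Then ‖φf‖²_{D(δ_1)} ≤ 2‖f‖²_{D(δ_1)} + 2|f(1)|² D_1(φ) + ‖f‖²_{H²}, and in particular φf ∈ D(δ_1) with ‖φf‖²_{D(δ_1)} ≤ 2‖f‖²_{D(δ_1)} + 2|f(1)|². -/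
open Complex MeasureTheory Metric Set Filter
open scoped ENNReal Topology

noncomputable section

namespace Aux19

def T (u : ℂ → ℂ) (r : ℝ) : ℝ≥0∞ :=
  ENNReal.ofReal ((2 * Real.pi)⁻¹ * ∫ t in (0:ℝ)..(2 * Real.pi),
      ‖u ((r : ℂ) * Complex.exp ((t : ℂ) * Complex.I))‖ ^ 2)

lemma h2E_T (u : ℂ → ℂ) : h2E u = ⨆ r : Set.Ioo (0:ℝ) 1, T u r.1 := rfl

lemma norm_circle (r t : ℝ) : ‖(r : ℂ) * Complex.exp ((t : ℂ) * Complex.I)‖ = |r| := by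
  rw [norm_mul, Complex.norm_exp_ofReal_mul_I,
    Complex.norm_real, Real.norm_eq_abs, mul_one]

lemma mem_oDisc {r : ℝ} (hr : r ∈ Set.Ioo (0:ℝ) 1) (t : ℝ) :
    ((r : ℂ) * Complex.exp ((t : ℂ) * Complex.I)) ∈ oDisc := by
  simp only [oDisc, Metric.mem_ball, dist_zero_right, norm_circle]
  rw [abs_of_pos hr.1]; exact hr.2

lemma ne_one_of_mem {z : ℂ} (hz : z ∈ oDisc) : z ≠ 1 := by
  intro h
  simp only [oDisc, Metric.mem_ball, dist_zero_right, h] at hz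
  norm_num at hz

lemma circleCont {u : ℂ → ℂ} (hu : ContinuousOn u oDisc) {r : ℝ} (hr : r ∈ Set.Ioo (0:ℝ) 1) :
    Continuous fun t : ℝ => ‖u ((r : ℂ) * Complex.exp ((t : ℂ) * Complex.I))‖ ^ 2 := by
  have hc : Continuous fun t : ℝ => (r : ℂ) * Complex.exp ((t : ℂ) * Complex.I) := by fun_prop
  have h1 : ContinuousOn (fun t : ℝ => u ((r : ℂ) * Complex.exp ((t : ℂ) * Complex.I)))
      Set.univ := hu.comp hc.continuousOn (fun t _ => mem_oDisc hr t)
  have h2 : Continuous (fun t : ℝ => u ((r : ℂ) * Complex.exp ((t : ℂ) * Complex.I))) := by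
    rw [← continuousOn_univ]; exact h1
  exact h2.norm.pow 2

lemma T_int {u : ℂ → ℂ} (hu : ContinuousOn u oDisc) {r : ℝ} (hr : r ∈ Set.Ioo (0:ℝ) 1)
    (a b : ℝ) :
    IntervalIntegrable (fun t => ‖u ((r : ℂ) * Complex.exp ((t : ℂ) * Complex.I))‖ ^ 2)
      volume a b :=
  (circleCont hu hr).intervalIntegrable a b

lemma T_nonneg {u : ℂ → ℂ} (r : ℝ) :
    0 ≤ (2 * Real.pi)⁻¹ * ∫ t in (0:ℝ)..(2 * Real.pi),
      ‖u ((r : ℂ) * Complex.exp ((t : ℂ) * Complex.I))‖ ^ 2 := by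
  have h1 : 0 ≤ ∫ t in (0:ℝ)..(2 * Real.pi),
      ‖u ((r : ℂ) * Complex.exp ((t : ℂ) * Complex.I))‖ ^ 2 :=
    intervalIntegral.integral_nonneg Real.two_pi_pos.le (fun t _ => by positivity)
  positivity

lemma T_mono {u v : ℂ → ℂ} (hu : ContinuousOn u oDisc) (hv : ContinuousOn v oDisc)
    (hle : ∀ z ∈ oDisc, ‖u z‖ ≤ ‖v z‖) {r : ℝ} (hr : r ∈ Set.Ioo (0:ℝ) 1) :
    T u r ≤ T v r := by
  apply ENNReal.ofReal_le_ofReal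
  apply mul_le_mul_of_nonneg_left _ (by positivity)
  apply intervalIntegral.integral_mono_on Real.two_pi_pos.le (T_int hu hr 0 _) (T_int hv hr 0 _)
  intro t _
  exact pow_le_pow_left₀ (norm_nonneg _) (hle _ (mem_oDisc hr t)) 2

lemma h2E_mono {u v : ℂ → ℂ} (hu : ContinuousOn u oDisc) (hv : ContinuousOn v oDisc)
    (hle : ∀ z ∈ oDisc, ‖u z‖ ≤ ‖v z‖) : h2E u ≤ h2E v := by
  rw [h2E_T, h2E_T]
  exact iSup_mono fun r => T_mono hu hv hle r.2

lemma h2E_congr {u v : ℂ → ℂ} (huv : ∀ z ∈ oDisc, u z = v z) : h2E u = h2E v := by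
  rw [h2E_T, h2E_T]
  apply iSup_congr
  intro r
  unfold T
  congr 2
  apply intervalIntegral.integral_congr
  intro t _
  simp only []
  rw [huv _ (mem_oDisc r.2 t)]

lemma h2E_const_mul (a : ℂ) (u : ℂ → ℂ) :
    h2E (fun z => a * u z) = ENNReal.ofReal (‖a‖ ^ 2) * h2E u := by
  rw [h2E_T, h2E_T, ENNReal.mul_iSup]
  apply iSup_congr
  intro r
  unfold T
  rw [← ENNReal.ofReal_mul (by positivity)]
  congr 1
  have : ∀ t : ℝ, ‖a * u ((r.1 : ℂ) * Complex.exp ((t : ℂ) * Complex.I))‖ ^ 2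
      = ‖a‖ ^ 2 * ‖u ((r.1 : ℂ) * Complex.exp ((t : ℂ) * Complex.I))‖ ^ 2 := by
    intro t; rw [norm_mul, mul_pow]
  rw [intervalIntegral.integral_congr (fun t _ => this t), intervalIntegral.integral_const_mul]
  ring


lemma T_two_le {w u v : ℂ → ℂ} (hw : ContinuousOn w oDisc) (hu : ContinuousOn u oDisc)
    (hv : ContinuousOn v oDisc)
    (hpt : ∀ z ∈ oDisc, ‖w z‖ ^ 2 ≤ 2 * ‖u z‖ ^ 2 + 2 * ‖v z‖ ^ 2)
    {r : ℝ} (hr : r ∈ Set.Ioo (0:ℝ) 1) :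
    T w r ≤ 2 * T u r + 2 * T v r := by
  set cu := (2 * Real.pi)⁻¹ * ∫ t in (0:ℝ)..(2 * Real.pi),
      ‖u ((r : ℂ) * Complex.exp ((t : ℂ) * Complex.I))‖ ^ 2 with hcu
  set cv := (2 * Real.pi)⁻¹ * ∫ t in (0:ℝ)..(2 * Real.pi),
      ‖v ((r : ℂ) * Complex.exp ((t : ℂ) * Complex.I))‖ ^ 2 with hcv
  have hcu0 : 0 ≤ cu := T_nonneg r
  have hcv0 : 0 ≤ cv := T_nonneg r
  have hI : ∫ t in (0:ℝ)..(2 * Real.pi),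
        ‖w ((r : ℂ) * Complex.exp ((t : ℂ) * Complex.I))‖ ^ 2
      ≤ ∫ t in (0:ℝ)..(2 * Real.pi),
        (2 * ‖u ((r : ℂ) * Complex.exp ((t : ℂ) * Complex.I))‖ ^ 2
         + 2 * ‖v ((r : ℂ) * Complex.exp ((t : ℂ) * Complex.I))‖ ^ 2) := by
    apply intervalIntegral.integral_mono_on Real.two_pi_pos.le (T_int hw hr 0 _)
    · exact (((T_int hu hr 0 _).const_mul 2).add ((T_int hv hr 0 _).const_mul 2))
    · intro t _
      exact hpt _ (mem_oDisc hr t)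
  have hsplit : ∫ t in (0:ℝ)..(2 * Real.pi),
        (2 * ‖u ((r : ℂ) * Complex.exp ((t : ℂ) * Complex.I))‖ ^ 2
         + 2 * ‖v ((r : ℂ) * Complex.exp ((t : ℂ) * Complex.I))‖ ^ 2)
      = 2 * (∫ t in (0:ℝ)..(2 * Real.pi),
          ‖u ((r : ℂ) * Complex.exp ((t : ℂ) * Complex.I))‖ ^ 2)
        + 2 * ∫ t in (0:ℝ)..(2 * Real.pi),
          ‖v ((r : ℂ) * Complex.exp ((t : ℂ) * Complex.I))‖ ^ 2 := by
    rw [intervalIntegral.integral_add ((T_int hu hr 0 _).const_mul 2)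
      ((T_int hv hr 0 _).const_mul 2), intervalIntegral.integral_const_mul,
      intervalIntegral.integral_const_mul]
  have hle : (2 * Real.pi)⁻¹ * ∫ t in (0:ℝ)..(2 * Real.pi),
        ‖w ((r : ℂ) * Complex.exp ((t : ℂ) * Complex.I))‖ ^ 2 ≤ 2 * cu + 2 * cv := by
    rw [hcu, hcv]
    have h2 := mul_le_mul_of_nonneg_left hI (by positivity : (0:ℝ) ≤ (2 * Real.pi)⁻¹)
    rw [hsplit] at h2
    calc (2 * Real.pi)⁻¹ * ∫ t in (0:ℝ)..(2 * Real.pi),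
          ‖w ((r : ℂ) * Complex.exp ((t : ℂ) * Complex.I))‖ ^ 2 ≤ _ := h2
      _ = _ := by ring
  calc T w r ≤ ENNReal.ofReal (2 * cu + 2 * cv) := ENNReal.ofReal_le_ofReal hle
    _ = ENNReal.ofReal (2 * cu) + ENNReal.ofReal (2 * cv) :=
        ENNReal.ofReal_add (by positivity) (by positivity)
    _ = 2 * T u r + 2 * T v r := by
        rw [ENNReal.ofReal_mul (by norm_num : (0:ℝ) ≤ 2),
          ENNReal.ofReal_mul (by norm_num : (0:ℝ) ≤ 2)]
        norm_num [T, hcu, hcv]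

lemma h2E_two_le {w u v : ℂ → ℂ} (hw : ContinuousOn w oDisc) (hu : ContinuousOn u oDisc)
    (hv : ContinuousOn v oDisc)
    (hpt : ∀ z ∈ oDisc, ‖w z‖ ^ 2 ≤ 2 * ‖u z‖ ^ 2 + 2 * ‖v z‖ ^ 2) :
    h2E w ≤ 2 * h2E u + 2 * h2E v := by
  rw [h2E_T]
  apply iSup_le
  intro r
  calc T w r.1 ≤ 2 * T u r.1 + 2 * T v r.1 := T_two_le hw hu hv hpt r.2
    _ ≤ 2 * h2E u + 2 * h2E v := by
        rw [h2E_T u, h2E_T v]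
        exact add_le_add (mul_le_mul_right (le_iSup (fun s : Set.Ioo (0:ℝ) 1 => T u s.1) r) 2)
          (mul_le_mul_right (le_iSup (fun s : Set.Ioo (0:ℝ) 1 => T v s.1) r) 2)

lemma integral_inv_sq {ε : ℝ} (hε : 0 < ε) :
    ∫ t in (0:ℝ)..1, ((ε + 2 * t) ^ 2)⁻¹ = (2 * ε)⁻¹ - (2 * (ε + 2))⁻¹ := by
  have h : ∀ t ∈ Set.uIcc (0:ℝ) 1,
      HasDerivAt (fun s : ℝ => -(2⁻¹ * (ε + 2 * s)⁻¹)) (((ε + 2 * t) ^ 2)⁻¹) t := by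
    intro t ht
    rw [Set.uIcc_of_le (by norm_num)] at ht
    have h0 : ε + 2 * t ≠ 0 := by nlinarith [ht.1]
    have h1 : HasDerivAt (fun s : ℝ => ε + 2 * s) 2 t := by
      exact (((hasDerivAt_id' t).const_mul (2:ℝ)).const_add ε).congr_deriv (mul_one 2)
    have h2 := h1.inv h0
    have h3 := (h2.const_mul (2⁻¹ : ℝ)).neg
    convert h3 using 1
    · rfl
    · rfl
    · rfl
    · ring
  have hint : IntervalIntegrable (fun t : ℝ => ((ε + 2 * t) ^ 2)⁻¹) volume 0 1 := by
    apply ContinuousOn.intervalIntegrable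
    apply ContinuousOn.inv₀ (by fun_prop)
    intro t ht
    rw [Set.uIcc_of_le (by norm_num)] at ht
    have : 0 < ε + 2 * t := by nlinarith [ht.1]
    positivity
  rw [intervalIntegral.integral_eq_sub_of_hasDerivAt h hint]
  have h1 : ε + 2 * (1:ℝ) ≠ 0 := by nlinarith
  have h2 : ε + 2 * (0:ℝ) ≠ 0 := by nlinarith
  field_simp
  ring


lemma key {k : ℂ → ℂ} {d : ℂ} (h : ∀ z ∈ oDisc, (z - 1) * k z = d) (hk2 : h2E k < ⊤) :
    d = 0 := by
  by_contra hd
  have hπ := Real.two_pi_pos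
  set M : ℝ := (h2E k).toReal with hM
  have hM0 : 0 ≤ M := ENNReal.toReal_nonneg
  set B : ℝ := ‖d‖ ^ 2 / (2 * Real.pi) with hB
  have hd0 : 0 < ‖d‖ := norm_pos_iff.mpr hd
  have hB0 : 0 < B := by positivity
  set ε : ℝ := (2 * (M / B + 1))⁻¹ with hε
  have hX : (1:ℝ) ≤ M / B + 1 := by
    have := div_nonneg hM0 hB0.le; linarith
  have hε0 : 0 < ε := by positivity
  have hεhalf : ε ≤ 1 / 2 := by
    rw [hε, show (1:ℝ)/2 = (2:ℝ)⁻¹ by norm_num]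
    apply inv_anti₀ (by norm_num)
    linarith
  set r : ℝ := 1 - ε with hr'
  have hr : r ∈ Set.Ioo (0:ℝ) 1 := ⟨by rw [hr']; linarith, by rw [hr']; linarith⟩
  set z : ℝ → ℂ := fun t => (r : ℂ) * Complex.exp ((t : ℂ) * Complex.I) with hzdef
  have hzmem : ∀ t, z t ∈ oDisc := fun t => mem_oDisc hr t
  have hz1 : ∀ t, z t - 1 ≠ 0 := fun t => sub_ne_zero.mpr (ne_one_of_mem (hzmem t))
  have hkz : ∀ t, k (z t) = d / (z t - 1) := by
    intro t
    rw [eq_div_iff (hz1 t), mul_comm]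
    exact h _ (hzmem t)
  have hden : Continuous fun t => z t - 1 := by
    rw [hzdef]; fun_prop
  have hC : Continuous fun t : ℝ => ‖d / (z t - 1)‖ ^ 2 :=
    (continuous_const.div hden hz1).norm.pow 2
  have hlow : ∀ t ∈ Set.Icc (0:ℝ) 1,
      ‖d‖ ^ 2 * ((ε + 2 * t) ^ 2)⁻¹ ≤ ‖d / (z t - 1)‖ ^ 2 := by
    intro t ht
    have h1 : ‖z t - 1‖ ≤ ε + 2 * t := by
      have e1 : z t - 1 = ((r : ℂ) - 1) * Complex.exp ((t:ℂ) * Complex.I)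
          + (Complex.exp ((t:ℂ) * Complex.I) - 1) := by rw [hzdef]; ring
      have e2 : ‖((r:ℂ) - 1) * Complex.exp ((t:ℂ) * Complex.I)‖ = ε := by
        rw [norm_mul, show ((r:ℂ) - 1) = ((r - 1 : ℝ) : ℂ) by push_cast; ring,
          Complex.norm_real, Real.norm_eq_abs,
          show ‖Complex.exp ((t:ℂ) * Complex.I)‖ = 1 from by
            rw [Complex.norm_exp_ofReal_mul_I],
          mul_one, hr']
        rw [abs_of_nonpos (by linarith)]
        ring
      have e3 : ‖Complex.exp ((t:ℂ) * Complex.I) - 1‖ ≤ 2 * t := by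
        have habs : ‖(t:ℂ) * Complex.I‖ = |t| := by
          rw [norm_mul, Complex.norm_I, Complex.norm_real, Real.norm_eq_abs, mul_one]
        have hx : ‖(t:ℂ) * Complex.I‖ ≤ 1 := by
          rw [habs, _root_.abs_of_nonneg ht.1]; exact ht.2
        have := Complex.norm_exp_sub_one_le hx
        rw [habs, _root_.abs_of_nonneg ht.1] at this
        exact this
      calc ‖z t - 1‖ = ‖((r:ℂ) - 1) * Complex.exp ((t:ℂ) * Complex.I)
            + (Complex.exp ((t:ℂ) * Complex.I) - 1)‖ := by rw [← e1]
        _ ≤ ‖((r:ℂ) - 1) * Complex.exp ((t:ℂ) * Complex.I)‖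
            + ‖Complex.exp ((t:ℂ) * Complex.I) - 1‖ := norm_add_le _ _
        _ ≤ ε + 2 * t := add_le_add e2.le e3
    have h2 : (0:ℝ) < ‖z t - 1‖ := norm_pos_iff.mpr (hz1 t)
    have h3 : ‖z t - 1‖ ^ 2 ≤ (ε + 2 * t) ^ 2 := by
      apply pow_le_pow_left₀ (norm_nonneg _) h1
    calc ‖d‖ ^ 2 * ((ε + 2 * t) ^ 2)⁻¹ = ‖d‖ ^ 2 / (ε + 2 * t) ^ 2 := by ring
      _ ≤ ‖d‖ ^ 2 / ‖z t - 1‖ ^ 2 := by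
          apply div_le_div_of_nonneg_left (by positivity) (by positivity) h3
      _ = ‖d / (z t - 1)‖ ^ 2 := by rw [norm_div, div_pow]
  have hIlow : ‖d‖ ^ 2 * ((2 * ε)⁻¹ - (2 * (ε + 2))⁻¹)
      ≤ ∫ t in (0:ℝ)..1, ‖d / (z t - 1)‖ ^ 2 := by
    have hi1 : IntervalIntegrable (fun t : ℝ => ‖d‖ ^ 2 * ((ε + 2 * t) ^ 2)⁻¹) volume 0 1 := by
      apply ContinuousOn.intervalIntegrable
      apply ContinuousOn.mul continuousOn_const
      apply ContinuousOn.inv₀ (by fun_prop)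
      intro t ht
      rw [Set.uIcc_of_le (by norm_num)] at ht
      have : (0:ℝ) < ε + 2 * t := by nlinarith [ht.1]
      positivity
    have hmono := intervalIntegral.integral_mono_on (by norm_num : (0:ℝ) ≤ 1) hi1
      (hC.intervalIntegrable 0 1) hlow
    calc ‖d‖ ^ 2 * ((2 * ε)⁻¹ - (2 * (ε + 2))⁻¹)
        = ∫ t in (0:ℝ)..1, ‖d‖ ^ 2 * ((ε + 2 * t) ^ 2)⁻¹ := by
          rw [intervalIntegral.integral_const_mul, integral_inv_sq hε0]
      _ ≤ _ := hmono
  have h2pi1 : (1:ℝ) ≤ 2 * Real.pi := by nlinarith [Real.pi_gt_three]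
  have hIext : ∫ t in (0:ℝ)..1, ‖d / (z t - 1)‖ ^ 2
      ≤ ∫ t in (0:ℝ)..(2 * Real.pi), ‖d / (z t - 1)‖ ^ 2 := by
    rw [← intervalIntegral.integral_add_adjacent_intervals (hC.intervalIntegrable 0 1)
      (hC.intervalIntegrable 1 (2 * Real.pi))]
    have : 0 ≤ ∫ t in (1:ℝ)..(2 * Real.pi), ‖d / (z t - 1)‖ ^ 2 :=
      intervalIntegral.integral_nonneg h2pi1 (fun t _ => by positivity)
    linarith
  set V : ℝ := (2 * Real.pi)⁻¹ * ∫ t in (0:ℝ)..(2 * Real.pi), ‖k (z t)‖ ^ 2 with hV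
  have hVnonneg : 0 ≤ V := by
    have h0 : 0 ≤ ∫ t in (0:ℝ)..(2 * Real.pi), ‖k (z t)‖ ^ 2 :=
      intervalIntegral.integral_nonneg Real.two_pi_pos.le (fun t _ => by positivity)
    rw [hV]; positivity
  have hVle : V ≤ M := by
    have h1 : T k r ≤ h2E k := by
      rw [h2E_T]
      exact le_iSup (fun s : Set.Ioo (0:ℝ) 1 => T k s.1) ⟨r, hr⟩
    have h2 := ENNReal.toReal_mono hk2.ne h1
    have h3 : (T k r).toReal = V := by
      rw [T, ENNReal.toReal_ofReal (T_nonneg r), hV, hzdef]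
    rw [← h3, hM]
    exact h2
  have hVge : M + 3 / 4 * B ≤ V := by
    have hcongr : ∫ t in (0:ℝ)..(2 * Real.pi), ‖k (z t)‖ ^ 2
        = ∫ t in (0:ℝ)..(2 * Real.pi), ‖d / (z t - 1)‖ ^ 2 := by
      apply intervalIntegral.integral_congr
      intro t _
      simp only [hkz t]
    have hinv : (2 * ε)⁻¹ = M / B + 1 := by
      rw [hε]
      rw [show (2 : ℝ) * (2 * (M / B + 1))⁻¹ = (M / B + 1)⁻¹ from by
        field_simp]
      rw [inv_inv]
    have hq : (2 * (ε + 2))⁻¹ ≤ (4:ℝ)⁻¹ :=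
      inv_anti₀ (by norm_num) (by linarith)
    have hchain : ‖d‖ ^ 2 * ((2 * ε)⁻¹ - (2 * (ε + 2))⁻¹)
        ≤ ∫ t in (0:ℝ)..(2 * Real.pi), ‖d / (z t - 1)‖ ^ 2 :=
      le_trans hIlow hIext
    have hfinal : M + 3 / 4 * B ≤ (2 * Real.pi)⁻¹ * (‖d‖ ^ 2 * ((2 * ε)⁻¹ - (2 * (ε + 2))⁻¹)) := by
      rw [hinv]
      have hBd : (2 * Real.pi)⁻¹ * ‖d‖ ^ 2 = B := by rw [hB]; ring
      have hMB : M / B * B = M := div_mul_cancel₀ M hB0.ne'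
      calc M + 3 / 4 * B = B * (M / B + 1 - 4⁻¹) := by
            rw [mul_sub, mul_add, mul_comm B (M/B), hMB]; ring
        _ ≤ B * (M / B + 1 - (2 * (ε + 2))⁻¹) := by
            apply mul_le_mul_of_nonneg_left _ hB0.le
            linarith
        _ = (2 * Real.pi)⁻¹ * (‖d‖ ^ 2 * (M / B + 1 - (2 * (ε + 2))⁻¹)) := by
            rw [← hBd]; ring
    calc M + 3 / 4 * B ≤ (2 * Real.pi)⁻¹ * (‖d‖ ^ 2 * ((2 * ε)⁻¹ - (2 * (ε + 2))⁻¹)) := hfinal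
      _ ≤ (2 * Real.pi)⁻¹ * ∫ t in (0:ℝ)..(2 * Real.pi), ‖d / (z t - 1)‖ ^ 2 :=
          mul_le_mul_of_nonneg_left hchain (by positivity)
      _ = V := by rw [hV, hcongr]
  linarith


lemma dec_unique {h : ℂ → ℂ} {c₁ c₂ : ℂ} {g₁ g₂ : ℂ → ℂ}
    (hm₁ : MemH2 g₁) (hm₂ : MemH2 g₂)
    (h1 : ∀ z ∈ oDisc, h z = c₁ + (z - 1) * g₁ z)
    (h2 : ∀ z ∈ oDisc, h z = c₂ + (z - 1) * g₂ z) :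
    h2E g₁ = h2E g₂ := by
  have hc₁ : ContinuousOn g₁ oDisc := hm₁.1.continuousOn
  have hc₂ : ContinuousOn g₂ oDisc := hm₂.1.continuousOn
  have hk : ∀ z ∈ oDisc, (z - 1) * (fun w => g₁ w - g₂ w) z = c₂ - c₁ := by
    intro z hz
    have e := (h1 z hz).symm.trans (h2 z hz)
    simp only []
    linear_combination e
  have hfin : h2E (fun w => g₁ w - g₂ w) < ⊤ := by
    have hb := h2E_two_le (w := fun w => g₁ w - g₂ w) (hc₁.sub hc₂) hc₁ hc₂ (fun z _ => by
      have := norm_sub_le (g₁ z) (g₂ z)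
      nlinarith [norm_nonneg (g₁ z), norm_nonneg (g₂ z), norm_nonneg (g₁ z - g₂ z),
        sq_nonneg (‖g₁ z‖ - ‖g₂ z‖)])
    refine lt_of_le_of_lt hb ?_
    apply ENNReal.add_lt_top.mpr
    exact ⟨ENNReal.mul_lt_top (by norm_num) hm₁.2,
      ENNReal.mul_lt_top (by norm_num) hm₂.2⟩
  have hc : c₂ - c₁ = 0 := key hk hfin
  have heq : ∀ z ∈ oDisc, g₁ z = g₂ z := by
    intro z hz
    have hz1 : z - 1 ≠ 0 := sub_ne_zero.mpr (ne_one_of_mem hz)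
    have hzz := hk z hz
    rw [hc] at hzz
    rcases mul_eq_zero.mp hzz with h' | h'
    · exact absurd h' hz1
    · exact sub_eq_zero.mp h'
  exact h2E_congr heq

end Aux19

open Aux19

/-- Quantitative multiplier estimate: if `f = c + (z-1) g ∈ D(δ_1)` and `φ ∈ H^∞ ∩ D(δ_1)`
with `‖φ‖_∞ ≤ 1` and `D_1(φ) ≤ 1`, then `φ f ∈ D(δ_1)` with
`‖φf‖²_{D(δ_1)} ≤ 2‖f‖²_{D(δ_1)} + 2|f(1)|² D_1(φ) + ‖f‖²_{H²}`, and in particular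
`‖φf‖²_{D(δ_1)} ≤ 2‖f‖²_{D(δ_1)} + 2|f(1)|²`. -/
theorem stmt19 (f g φ gφ : ℂ → ℂ) (c cφ : ℂ)
    (hg : MemH2 g) (hdec : ∀ z ∈ oDisc, f z = c + (z - 1) * g z)
    (hφa : DifferentiableOn ℂ φ oDisc) (hφb : ∀ z ∈ oDisc, ‖φ z‖ ≤ 1)
    (hgφ : MemH2 gφ) (hdecφ : ∀ z ∈ oDisc, φ z = cφ + (z - 1) * gφ z)
    (hD1φ : h2E gφ ≤ 1) :
    MemD 1 (fun z => φ z * f z) ∧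
    h2E (fun z => φ z * f z) + Dloc 1 (fun z => φ z * f z) ≤
      2 * (h2E f + h2E g) + 2 * ENNReal.ofReal (‖c‖ ^ 2) * h2E gφ + h2E f ∧
    h2E (fun z => φ z * f z) + Dloc 1 (fun z => φ z * f z) ≤
      2 * (h2E f + h2E g) + 2 * ENNReal.ofReal (‖c‖ ^ 2) := by
  have hgc : ContinuousOn g oDisc := hg.1.continuousOn
  have hgφc : ContinuousOn gφ oDisc := hgφ.1.continuousOn
  have hφc : ContinuousOn φ oDisc := hφa.continuousOn
  have hfc : ContinuousOn f oDisc := by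
    apply ContinuousOn.congr
      (continuousOn_const.add ((continuousOn_id.sub continuousOn_const).mul hgc))
    intro z hz
    exact hdec z hz
  have hGc : ContinuousOn (fun z => c * gφ z + φ z * g z) oDisc :=
    (continuousOn_const.mul hgφc).add (hφc.mul hgc)
  have hGd : DifferentiableOn ℂ (fun z => c * gφ z + φ z * g z) oDisc :=
    ((differentiableOn_const c).mul hgφ.1).add (hφa.mul hg.1)
  have hdecG : ∀ z ∈ oDisc, φ z * f z = c * cφ + (z - 1) * (c * gφ z + φ z * g z) := by
    intro z hz
    rw [hdec z hz, hdecφ z hz]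
    ring
  have hpt : ∀ z ∈ oDisc, ‖(fun w => c * gφ w + φ w * g w) z‖ ^ 2
      ≤ 2 * ‖(fun w => c * gφ w) z‖ ^ 2 + 2 * ‖(fun w => φ w * g w) z‖ ^ 2 := by
    intro z _
    simp only []
    have := norm_add_le (c * gφ z) (φ z * g z)
    nlinarith [norm_nonneg (c * gφ z), norm_nonneg (φ z * g z),
      norm_nonneg (c * gφ z + φ z * g z), sq_nonneg (‖c * gφ z‖ - ‖φ z * g z‖)]
  have hGb : h2E (fun z => c * gφ z + φ z * g z)
      ≤ 2 * (ENNReal.ofReal (‖c‖ ^ 2) * h2E gφ) + 2 * h2E g := by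
    have h1 := h2E_two_le (u := fun w => c * gφ w) (v := fun w => φ w * g w) hGc (continuousOn_const.mul hgφc) (hφc.mul hgc) hpt
    have h2 : h2E (fun w => c * gφ w) = ENNReal.ofReal (‖c‖ ^ 2) * h2E gφ :=
      h2E_const_mul c gφ
    have h3 : h2E (fun w => φ w * g w) ≤ h2E g := by
      apply h2E_mono (u := fun w => φ w * g w) (hφc.mul hgc) hgc
      intro z hz
      rw [norm_mul]
      calc ‖φ z‖ * ‖g z‖ ≤ 1 * ‖g z‖ :=
            mul_le_mul_of_nonneg_right (hφb z hz) (norm_nonneg _)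
        _ = ‖g z‖ := one_mul _
    calc h2E (fun z => c * gφ z + φ z * g z)
        ≤ 2 * h2E (fun w => c * gφ w) + 2 * h2E (fun w => φ w * g w) := h1
      _ ≤ 2 * (ENNReal.ofReal (‖c‖ ^ 2) * h2E gφ) + 2 * h2E g := by
          rw [h2]
          exact add_le_add le_rfl (mul_le_mul_right h3 2)
  have hGfin : h2E (fun z => c * gφ z + φ z * g z) < ⊤ := by
    refine lt_of_le_of_lt hGb ?_
    apply ENNReal.add_lt_top.mpr
    refine ⟨ENNReal.mul_lt_top (by norm_num) ?_, ENNReal.mul_lt_top (by norm_num) hg.2⟩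
    exact ENNReal.mul_lt_top ENNReal.ofReal_lt_top hgφ.2
  have hMemG : MemH2 (fun z => c * gφ z + φ z * g z) := ⟨hGd, hGfin⟩
  have hex : ∃ p : ℂ × (ℂ → ℂ), MemH2 p.2 ∧
      ∀ z ∈ oDisc, (fun z => φ z * f z) z = p.1 + (z - 1) * p.2 z :=
    ⟨(c * cφ, fun z => c * gφ z + φ z * g z), hMemG, fun z hz => hdecG z hz⟩
  have hDloc : Dloc 1 (fun z => φ z * f z) = h2E (fun z => c * gφ z + φ z * g z) := by
    simp only [Dloc]
    rw [dif_pos hex]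
    exact dec_unique hex.choose_spec.1 hMemG hex.choose_spec.2 (fun z hz => hdecG z hz)
  have hFle : h2E (fun z => φ z * f z) ≤ h2E f := by
    apply h2E_mono (u := fun z => φ z * f z) (hφc.mul hfc) hfc
    intro z hz
    rw [norm_mul]
    calc ‖φ z‖ * ‖f z‖ ≤ 1 * ‖f z‖ :=
          mul_le_mul_of_nonneg_right (hφb z hz) (norm_nonneg _)
      _ = ‖f z‖ := one_mul _
  have hmain : h2E (fun z => φ z * f z) + Dloc 1 (fun z => φ z * f z)
      ≤ h2E f + (2 * (ENNReal.ofReal (‖c‖ ^ 2) * h2E gφ) + 2 * h2E g) := by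
    rw [hDloc]
    exact add_le_add hFle hGb
  refine ⟨⟨c * cφ, fun z => c * gφ z + φ z * g z, hMemG, hdecG⟩, ?_, ?_⟩
  · refine le_trans hmain ?_
    have e : 2 * (h2E f + h2E g) + 2 * ENNReal.ofReal (‖c‖ ^ 2) * h2E gφ + h2E f
        = (h2E f + (2 * (ENNReal.ofReal (‖c‖ ^ 2) * h2E gφ) + 2 * h2E g)) + 2 * h2E f := by
      ring
    rw [e]
    exact self_le_add_right _ _
  · refine le_trans hmain (le_trans (b := h2E f + (2 * (ENNReal.ofReal (‖c‖ ^ 2) * 1) + 2 * h2E g)) ?_ ?_)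
    · exact add_le_add le_rfl (add_le_add
        (mul_le_mul_right (mul_le_mul_right hD1φ _) 2) le_rfl)
    · have e : 2 * (h2E f + h2E g) + 2 * ENNReal.ofReal (‖c‖ ^ 2)
          = (h2E f + (2 * (ENNReal.ofReal (‖c‖ ^ 2) * 1) + 2 * h2E g)) + h2E f := by
        ring
      rw [e]
      exact self_le_add_right _ _
end
end
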